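/- There exists a constant C(p) > 0, depending only on p and independent of k and of the choices of the intervals I(J), such that for every K ∈ 𝐊, every subinterval L of K sharing an endpoint with K, and every subinterval L' of L sharing an endpoint with K, one has ⟨w_k⟩_{L'} ≤ C(p)⟨w_k⟩_L and ⟨σ_k⟩_{L'} ≤ C(p)⟨σ_k⟩_L. -/

import Mathlib

open MeasureTheory Set Filter

noncomputable section

namespace RTpaper

/-- The half-open interval `[a, b)` represented by the pair `(a, b)`. -/
def ivSet (I : ℝ × ℝ) : Set ℝ := Set.Ico I.1 I.2

/-- The length of the interval represented by `I`. -/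
def len (I : ℝ × ℝ) : ℝ := I.2 - I.1

/-- The middle triadic child of an interval. -/
def mid (I : ℝ × ℝ) : ℝ × ℝ := (I.1 + (I.2 - I.1) / 3, I.2 - (I.2 - I.1) / 3)

/-- The families `𝐊ᵢ` of the Reguera–Thiele construction. -/
def Kfam (k : ℕ) : ℕ → Set (ℝ × ℝ)
  | 0 => {((0 : ℝ), (1 : ℝ))}
  | (i + 1) =>
      {I | ∃ K ∈ Kfam k i, ∃ j : ℕ, j < 3 ^ (k - 1) ∧
        I = ((mid K).1 + (j : ℝ) * ((3 : ℝ) ^ (1 - (k : ℤ)) * len (mid K)),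
             (mid K).1 + ((j : ℝ) + 1) * ((3 : ℝ) ^ (1 - (k : ℤ)) * len (mid K)))}

/-- The families `𝐉ᵢ` (of interest for `i ≥ 1`). -/
def Jfam (k i : ℕ) : Set (ℝ × ℝ) := {J | ∃ K ∈ Kfam k (i - 1), J = mid K}

/-- The family `𝐊 = ⋃ᵢ 𝐊ᵢ`. -/
def KK (k : ℕ) : Set (ℝ × ℝ) := ⋃ i, Kfam k i

/-- The family `𝐉 = ⋃_{i ≥ 1} 𝐉ᵢ`. -/
def JJ (k : ℕ) : Set (ℝ × ℝ) := ⋃ i, Jfam k (i + 1)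

/-- The chosen triadic interval `I(J)` adjacent to `J` of length `3^{1-k}|J|`, encoded by a
choice function `ch` deciding, for each `J`, whether `I(J)` lies to the right (`true`) or to
the left (`false`) of `J`. -/
def IJ (k : ℕ) (ch : ℝ × ℝ → Bool) (J : ℝ × ℝ) : ℝ × ℝ :=
  if ch J then (J.2, J.2 + (3 : ℝ) ^ (1 - (k : ℤ)) * len J)
  else (J.1 - (3 : ℝ) ^ (1 - (k : ℤ)) * len J, J.1)

/-- The weight `w_k = Σ_{i ≥ 1} Σ_{J ∈ 𝐉ᵢ} (3^k/(3^{k-1}+1))^i · 1_{I(J)}`. -/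
def wgt (k : ℕ) (ch : ℝ × ℝ → Bool) (x : ℝ) : ℝ :=
  ∑' i : ℕ, ∑' J : ↥(Jfam k (i + 1)),
    Set.indicator (ivSet (IJ k ch (J : ℝ × ℝ)))
      (fun _ => ((3 : ℝ) ^ k / ((3 : ℝ) ^ (k - 1) + 1)) ^ (i + 1)) x

/-- The weight `σ_k = w_k^{1-p}` on `{w_k > 0}`, and `0` elsewhere. -/
def sgm (p : ℝ) (k : ℕ) (ch : ℝ × ℝ → Bool) (x : ℝ) : ℝ :=
  if 0 < wgt k ch x then wgt k ch x ^ (1 - p) else 0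

/-- `u(I) = ∫_I u`. -/
def mass (u : ℝ → ℝ) (I : ℝ × ℝ) : ℝ := ∫ x in ivSet I, u x

/-- `⟨u⟩_I = u(I)/|I|`. -/
def avg (u : ℝ → ℝ) (I : ℝ × ℝ) : ℝ := mass u I / len I

/-- `ch_𝐊(K)`: the members of `𝐊_{i+1}` contained in `K ∈ 𝐊ᵢ`. -/
def chK (k : ℕ) (K : ℝ × ℝ) : Set (ℝ × ℝ) :=
  {K' | ∃ i, K ∈ Kfam k i ∧ K' ∈ Kfam k (i + 1) ∧ ivSet K' ⊆ ivSet K}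

/-- Triadic intervals of `ℝ`. -/
def IsTriadic (I : ℝ × ℝ) : Prop :=
  ∃ n j : ℤ, I.1 = (j : ℝ) * (3 : ℝ) ^ (-n) ∧ I.2 = ((j : ℝ) + 1) * (3 : ℝ) ^ (-n)

/-- Maximal members of `S` strictly contained in `R`. -/
def maxIn (S : Set (ℝ × ℝ)) (R : ℝ × ℝ) : Set (ℝ × ℝ) :=
  {Q | Q ∈ S ∧ ivSet Q ⊂ ivSet R ∧
    ∀ Q' ∈ S, ivSet Q ⊆ ivSet Q' → ivSet Q' ⊂ ivSet R → ivSet Q' = ivSet Q}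

/-- Martingale `ε`-sparse families of (half-open) intervals. -/
def MSparse (ε : ℝ) (S : Set (ℝ × ℝ)) : Prop :=
  S.Countable ∧ (∀ I ∈ S, I.1 < I.2) ∧
    (∀ I ∈ S, ∀ J ∈ S, ivSet I ⊆ ivSet J ∨ ivSet J ⊆ ivSet I ∨ ivSet I ∩ ivSet J = ∅) ∧
    ∀ R ∈ S, (∑' Q : ↥(maxIn S R), len (Q : ℝ × ℝ)) ≤ ε * len R

/-- `Σ_{I ∈ F} ⟨u⟩_I^q · ⟨v⟩_I · |I|`. -/
def sumTest (q : ℝ) (u v : ℝ → ℝ) (F : Set (ℝ × ℝ)) : ℝ :=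
  ∑' I : ↥F, avg u (I : ℝ × ℝ) ^ q * avg v (I : ℝ × ℝ) * len (I : ℝ × ℝ)

/-! Let `K ∈ 𝐊ₙ` and `J = A^m` with `A ∈ 𝐊ᵢ`. Intervals of one generation are disjoint, and
`I(J)` avoids `A^m`, which contains every descendant of `A`; so if `I(J)` meets `K`, then `A` is
`K` or a descendant of `K`, and as `3^{1-k} ≤ 1/9` the interval `I(J)` lies in the middle half of
`K` in both cases. Hence `w_k` and `σ_k` vanish on the outer
quarters of `K`. An interval `L'` with an endpoint in common with `K` therefore either lies in an
outer quarter, where both weights vanish, or has `|L'| ≥ |K|/4 ≥ |L|/4`, and then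
`⟨u⟩_{L'} ≤ 4⟨u⟩_L` by monotonicity of the integral. What remains is integrability: level `i`
of `w_k` has integral at most `(3^{1-k} C/3) (C/3)^i` with `C = 3^k/(3^{k-1}+1) < 3`, and
`σ_k ≤ 1` because `w_k ≥ 1` wherever it is positive. -/

lemma le_tsum_of_tsum_pos {ι : Type*} {f : ι → ℝ} {c : ℝ} (hf : ∀ i, 0 ≤ f i)
    (hfc : ∀ i, f i = 0 ∨ c ≤ f i) (hpos : 0 < ∑' i, f i) : c ≤ ∑' i, f i := by
  have hs : Summable f := by
    by_contra h
    rw [tsum_eq_zero_of_not_summable h] at hpos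
    exact hpos.false
  obtain ⟨i, hi⟩ : ∃ i, f i ≠ 0 := by
    by_contra! h
    simp [h] at hpos
  exact ((hfc i).resolve_left hi).trans (hs.le_tsum i fun j _ => hf j)

lemma integrable_tsum_of_nonneg {α ι : Type*} [MeasurableSpace α] [Countable ι] {μ : Measure α}
    {F : ι → α → ℝ} (hF₀ : ∀ i x, 0 ≤ F i x) (hF : ∀ i, Integrable (F i) μ)
    (hsum : Summable fun i => ∫ x, F i x ∂μ) : Integrable (fun x => ∑' i, F i x) μ := by
  have hrepr : (fun x => ∑' i, F i x) = fun x => (∑' i, ENNReal.ofReal (F i x)).toReal := by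
    funext x
    rw [ENNReal.tsum_toReal_eq fun _ => ENNReal.ofReal_ne_top]
    simp only [ENNReal.toReal_ofReal (hF₀ _ x)]
  rw [hrepr]
  refine integrable_toReal_of_lintegral_ne_top
    (AEMeasurable.tsum fun i => (hF i).aemeasurable.ennreal_ofReal) ?_
  rw [lintegral_tsum fun i => (hF i).aemeasurable.ennreal_ofReal]
  simp_rw [← ofReal_integral_eq_lintegral_ofReal (hF _) (Eventually.of_forall (hF₀ _))]
  rw [← ENNReal.ofReal_tsum_of_nonneg (fun i => integral_nonneg (hF₀ i)) hsum]
  exact ENNReal.ofReal_ne_top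

def core (A : ℝ × ℝ) : Set ℝ := Ico (A.1 + len A / 4) (A.2 - len A / 4)

lemma avg_le_four_mul_avg {u : ℝ → ℝ} (hu₀ : ∀ x, 0 ≤ u x) {K L L' : ℝ × ℝ}
    (hu : IntegrableOn u (ivSet K)) (hcore : ∀ x ∈ ivSet K \ core K, u x = 0)
    (hL : L.1 < L.2) (hLK : ivSet L ⊆ ivSet K) (hL'L : ivSet L' ⊆ ivSet L)
    (hL'K : L'.1 = K.1 ∨ L'.2 = K.2) : avg u L' ≤ 4 * avg u L := by
  obtain ⟨hKL₁, hLK₂⟩ := (Ico_subset_Ico_iff hL).1 hLK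
  have hLpos : 0 < len L := sub_pos.2 hL
  have hmassL : 0 ≤ mass u L := setIntegral_nonneg measurableSet_Ico fun x _ => hu₀ x
  by_cases hshort : len L' < len K / 4
  · have hzero : mass u L' = 0 := by
      refine setIntegral_eq_zero_of_forall_eq_zero fun x hx => hcore x ⟨hLK (hL'L hx), ?_⟩
      simp only [ivSet, core, len, mem_Ico] at hx hshort ⊢
      rcases hL'K with h | h <;> intro ⟨h₁, h₂⟩ <;> linarith
    rw [avg, hzero, zero_div]
    exact mul_nonneg (by norm_num) (div_nonneg hmassL hLpos.le)
  · rw [not_lt] at hshort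
    have hL'pos : 0 < len L' := by simp only [len] at hshort hLpos ⊢; linarith
    have hmass : mass u L' ≤ mass u L :=
      setIntegral_mono_set (hu.mono_set hLK) (Eventually.of_forall hu₀) hL'L.eventuallyLE
    have hlen : len L ≤ 4 * len L' := by simp only [len] at hshort ⊢; linarith
    calc avg u L' = mass u L' / len L' := rfl
      _ ≤ mass u L / len L' := by gcongr
      _ ≤ mass u L / (len L / 4) := by gcongr; linarith
      _ = 4 * avg u L := by rw [avg]; field_simp

def child (k : ℕ) (A : ℝ × ℝ) (j : ℕ) : ℝ × ℝ :=
  ((mid A).1 + (j : ℝ) * ((3 : ℝ) ^ (1 - (k : ℤ)) * len (mid A)),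
   (mid A).1 + ((j : ℝ) + 1) * ((3 : ℝ) ^ (1 - (k : ℤ)) * len (mid A)))

lemma mem_Kfam_succ {k n : ℕ} {I : ℝ × ℝ} :
    I ∈ Kfam k (n + 1) ↔ ∃ A ∈ Kfam k n, ∃ j < 3 ^ (k - 1), I = child k A j :=
  Iff.rfl

lemma mem_Jfam_succ {k i : ℕ} {J : ℝ × ℝ} : J ∈ Jfam k (i + 1) ↔ ∃ A ∈ Kfam k i, J = mid A :=
  Iff.rfl

lemma len_mid (A : ℝ × ℝ) : len (mid A) = len A / 3 := by
  simp only [len, mid]; ring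

lemma len_child (k : ℕ) (A : ℝ × ℝ) (j : ℕ) :
    len (child k A j) = (3 : ℝ) ^ (1 - (k : ℤ)) * len (mid A) := by
  simp only [len, child]; ring

lemma three_pow_pred_mul_zpow {k : ℕ} (hk : 1 ≤ k) :
    (3 : ℝ) ^ (k - 1) * (3 : ℝ) ^ (1 - (k : ℤ)) = 1 := by
  rw [← zpow_natCast, ← zpow_add₀ three_ne_zero, Nat.cast_sub hk]
  simp

lemma zpow_one_sub_le {k : ℕ} (hk : 3 ≤ k) : (3 : ℝ) ^ (1 - (k : ℤ)) ≤ 1 / 9 := by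
  calc (3 : ℝ) ^ (1 - (k : ℤ)) ≤ 3 ^ (-2 : ℤ) :=
        zpow_le_zpow_right₀ (by norm_num) (by omega)
    _ = 1 / 9 := by norm_num

lemma len_of_mem_Kfam {k n : ℕ} {K : ℝ × ℝ} (hK : K ∈ Kfam k n) :
    len K = ((3 : ℝ) ^ (1 - (k : ℤ)) / 3) ^ n := by
  induction n generalizing K with
  | zero => simp only [Kfam, mem_singleton_iff] at hK; simp [hK, len]
  | succ n ih =>
    obtain ⟨A, hA, j, -, rfl⟩ := mem_Kfam_succ.1 hK
    rw [len_child, len_mid, ih hA, pow_succ]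
    ring

lemma len_pos_of_mem_Kfam {k n : ℕ} {K : ℝ × ℝ} (hK : K ∈ Kfam k n) : 0 < len K := by
  rw [len_of_mem_Kfam hK]; positivity

lemma ivSet_mid_subset {A : ℝ × ℝ} (hA : 0 ≤ len A) : ivSet (mid A) ⊆ ivSet A := by
  simp only [len] at hA
  exact Ico_subset_Ico (by simp only [mid]; linarith) (by simp only [mid]; linarith)

lemma ivSet_child_subset_mid {k : ℕ} (hk : 1 ≤ k) {A : ℝ × ℝ} (hA : 0 ≤ len A) {j : ℕ}
    (hj : j < 3 ^ (k - 1)) : ivSet (child k A j) ⊆ ivSet (mid A) := by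
  have hmid : 0 ≤ len (mid A) := by rw [len_mid]; positivity
  set d := (3 : ℝ) ^ (1 - (k : ℤ)) * len (mid A)
  have hjd : ((j : ℝ) + 1) * d ≤ len (mid A) :=
    calc ((j : ℝ) + 1) * d ≤ (3 : ℝ) ^ (k - 1) * d := by gcongr; exact_mod_cast hj
      _ = len (mid A) := by rw [← mul_assoc, three_pow_pred_mul_zpow hk, one_mul]
  refine Ico_subset_Ico (le_add_of_nonneg_right (by positivity)) ?_
  simp only [len] at hjd
  simp only [child]
  linarith

lemma disjoint_child {k : ℕ} {A : ℝ × ℝ} (hA : 0 < len A) {j₁ j₂ : ℕ} (hj : j₁ ≠ j₂) :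
    Disjoint (ivSet (child k A j₁)) (ivSet (child k A j₂)) := by
  have hd : 0 < (3 : ℝ) ^ (1 - (k : ℤ)) * len (mid A) := by rw [len_mid]; positivity
  rw [Set.disjoint_left]
  rintro x ⟨h₁, h₂⟩ ⟨h₃, h₄⟩
  simp only [child] at h₁ h₂ h₃ h₄
  have h₁₂ : (j₁ : ℝ) < j₂ + 1 := lt_of_mul_lt_mul_right (by linarith) hd.le
  have h₂₁ : (j₂ : ℝ) < j₁ + 1 := lt_of_mul_lt_mul_right (by linarith) hd.le
  norm_cast at h₁₂ h₂₁
  omega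

lemma ivSet_child_subset {k : ℕ} (hk : 1 ≤ k) {A : ℝ × ℝ} (hA : 0 ≤ len A) {j : ℕ}
    (hj : j < 3 ^ (k - 1)) : ivSet (child k A j) ⊆ ivSet A :=
  (ivSet_child_subset_mid hk hA hj).trans (ivSet_mid_subset hA)

lemma exists_mem_Kfam_subset_mid {k n m : ℕ} (hk : 1 ≤ k) (hnm : n < m) {K : ℝ × ℝ}
    (hK : K ∈ Kfam k m) : ∃ A ∈ Kfam k n, ivSet K ⊆ ivSet (mid A) := by
  induction m, hnm using Nat.le_induction generalizing K with
  | base =>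
    obtain ⟨A, hA, j, hj, rfl⟩ := mem_Kfam_succ.1 hK
    exact ⟨A, hA, ivSet_child_subset_mid hk (len_pos_of_mem_Kfam hA).le hj⟩
  | succ m _ ih =>
    obtain ⟨P, hP, j, hj, rfl⟩ := mem_Kfam_succ.1 hK
    obtain ⟨A, hA, hPA⟩ := ih hP
    exact ⟨A, hA, (ivSet_child_subset hk (len_pos_of_mem_Kfam hP).le hj).trans hPA⟩

lemma disjoint_of_mem_Kfam {k n : ℕ} (hk : 1 ≤ k) {K₁ K₂ : ℝ × ℝ} (h₁ : K₁ ∈ Kfam k n)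
    (h₂ : K₂ ∈ Kfam k n) (hne : K₁ ≠ K₂) : Disjoint (ivSet K₁) (ivSet K₂) := by
  induction n generalizing K₁ K₂ with
  | zero =>
    simp only [Kfam, mem_singleton_iff] at h₁ h₂
    exact absurd (h₁.trans h₂.symm) hne
  | succ n ih =>
    obtain ⟨A₁, hA₁, j₁, hj₁, rfl⟩ := mem_Kfam_succ.1 h₁
    obtain ⟨A₂, hA₂, j₂, hj₂, rfl⟩ := mem_Kfam_succ.1 h₂
    by_cases hA : A₁ = A₂
    · subst hA
      exact disjoint_child (len_pos_of_mem_Kfam hA₁) fun hj => hne (hj ▸ rfl)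
    · exact (ih hA₁ hA₂ hA).mono (ivSet_child_subset hk (len_pos_of_mem_Kfam hA₁).le hj₁)
        (ivSet_child_subset hk (len_pos_of_mem_Kfam hA₂).le hj₂)

lemma core_subset_ivSet {A : ℝ × ℝ} (hA : 0 ≤ len A) : core A ⊆ ivSet A := by
  simp only [len] at hA
  exact Ico_subset_Ico (by simp only [len]; linarith) (by simp only [len]; linarith)

lemma ivSet_mid_subset_core {A : ℝ × ℝ} (hA : 0 ≤ len A) : ivSet (mid A) ⊆ core A := by
  simp only [len] at hA
  exact Ico_subset_Ico (by simp only [mid, len]; linarith) (by simp only [mid, len]; linarith)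

lemma ivSet_IJ_mid_subset_core {k : ℕ} (hk : 3 ≤ k) (ch : ℝ × ℝ → Bool) {A : ℝ × ℝ}
    (hA : 0 ≤ len A) : ivSet (IJ k ch (mid A)) ⊆ core A := by
  have hρ := mul_le_mul_of_nonneg_right (zpow_one_sub_le hk) hA
  have hρ₀ : 0 ≤ (3 : ℝ) ^ (1 - (k : ℤ)) * len A := by positivity
  simp only [len] at hA hρ hρ₀
  unfold IJ
  split_ifs <;>
  exact Ico_subset_Ico (by simp only [mid, len]; linarith) (by simp only [mid, len]; linarith)

lemma disjoint_IJ (k : ℕ) (ch : ℝ × ℝ → Bool) (J : ℝ × ℝ) :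
    Disjoint (ivSet (IJ k ch J)) (ivSet J) := by
  unfold IJ
  split_ifs <;> exact Ico_disjoint_Ico.2 (by simp)

lemma ivSet_IJ_inter_subset_core {k : ℕ} (hk : 3 ≤ k) (ch : ℝ × ℝ → Bool) {i n : ℕ}
    {J K : ℝ × ℝ} (hJ : J ∈ Jfam k (i + 1)) (hK : K ∈ Kfam k n) :
    ivSet (IJ k ch J) ∩ ivSet K ⊆ core K := by
  have hk₁ : 1 ≤ k := by omega
  obtain ⟨A, hA, rfl⟩ := mem_Jfam_succ.1 hJ
  have hA₀ := (len_pos_of_mem_Kfam hA).le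
  have hIA : ivSet (IJ k ch (mid A)) ⊆ ivSet A :=
    (ivSet_IJ_mid_subset_core hk ch hA₀).trans (core_subset_ivSet hA₀)
  rintro x ⟨hxI, hxK⟩
  rcases lt_trichotomy i n with hin | rfl | hni
  · obtain ⟨E, hE, hKE⟩ := exists_mem_Kfam_subset_mid hk₁ hin hK
    by_cases hEA : E = A
    · subst hEA
      exact absurd (hKE hxK) (disjoint_left.1 (disjoint_IJ k ch _) hxI)
    · exact absurd (ivSet_mid_subset (len_pos_of_mem_Kfam hE).le (hKE hxK))
        (disjoint_right.1 (disjoint_of_mem_Kfam hk₁ hE hA hEA) (hIA hxI))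
  · by_cases hAK : A = K
    · subst hAK
      exact ivSet_IJ_mid_subset_core hk ch hA₀ hxI
    · exact absurd hxK (disjoint_left.1 (disjoint_of_mem_Kfam hk₁ hA hK hAK) (hIA hxI))
  · obtain ⟨B, hB, hAB⟩ := exists_mem_Kfam_subset_mid hk₁ hni hA
    have hB₀ := (len_pos_of_mem_Kfam hB).le
    by_cases hBK : B = K
    · subst hBK
      exact ivSet_mid_subset_core hB₀ (hAB (hIA hxI))
    · exact absurd hxK (disjoint_left.1 (disjoint_of_mem_Kfam hk₁ hB hK hBK)
        (ivSet_mid_subset hB₀ (hAB (hIA hxI))))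

def ratio (k : ℕ) : ℝ := 3 ^ k / (3 ^ (k - 1) + 1)

-- `wgt k ch x = ∑' i, levelWgt k ch i x` holds by `rfl`.
def levelWgt (k : ℕ) (ch : ℝ × ℝ → Bool) (i : ℕ) (x : ℝ) : ℝ :=
  ∑' J : ↥(Jfam k (i + 1)), (ivSet (IJ k ch J)).indicator (fun _ => ratio k ^ (i + 1)) x

lemma ratio_pos (k : ℕ) : 0 < ratio k := by
  unfold ratio; positivity

lemma one_le_ratio {k : ℕ} (hk : 1 ≤ k) : 1 ≤ ratio k := by
  obtain ⟨m, rfl⟩ : ∃ m, k = m + 1 := ⟨k - 1, by omega⟩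
  rw [ratio, Nat.add_sub_cancel, pow_succ, le_div_iff₀ (by positivity)]
  nlinarith [one_le_pow₀ (M₀ := ℝ) (n := m) (by norm_num : (1 : ℝ) ≤ 3)]

lemma ratio_lt_three {k : ℕ} (hk : 1 ≤ k) : ratio k < 3 := by
  obtain ⟨m, rfl⟩ : ∃ m, k = m + 1 := ⟨k - 1, by omega⟩
  rw [ratio, Nat.add_sub_cancel, pow_succ, div_lt_iff₀ (by positivity)]
  linarith

lemma levelWgt_nonneg (k : ℕ) (ch : ℝ × ℝ → Bool) (i : ℕ) (x : ℝ) : 0 ≤ levelWgt k ch i x :=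
  tsum_nonneg fun _ => indicator_nonneg (fun _ _ => (pow_pos (ratio_pos k) _).le) x

lemma wgt_nonneg (k : ℕ) (ch : ℝ × ℝ → Bool) (x : ℝ) : 0 ≤ wgt k ch x :=
  tsum_nonneg fun i => levelWgt_nonneg k ch i x

lemma wgt_eq_zero_of_mem_diff_core {k n : ℕ} (hk : 3 ≤ k) (ch : ℝ × ℝ → Bool) {K : ℝ × ℝ}
    (hK : K ∈ Kfam k n) {x : ℝ} (hx : x ∈ ivSet K \ core K) : wgt k ch x = 0 := by
  have hxI : ∀ i (J : ↥(Jfam k (i + 1))), x ∉ ivSet (IJ k ch J) := fun _ J hxJ =>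
    hx.2 (ivSet_IJ_inter_subset_core hk ch J.2 hK ⟨hxJ, hx.1⟩)
  exact (tsum_congr fun i =>
    (tsum_congr fun J => indicator_of_notMem (hxI i J) _).trans tsum_zero).trans tsum_zero

lemma levelWgt_eq_zero_or_le (k : ℕ) (ch : ℝ × ℝ → Bool) (i : ℕ) (x : ℝ) :
    levelWgt k ch i x = 0 ∨ ratio k ^ (i + 1) ≤ levelWgt k ch i x := by
  refine (levelWgt_nonneg k ch i x).eq_or_lt.imp Eq.symm fun hpos =>
    le_tsum_of_tsum_pos (fun _ => indicator_nonneg (fun _ _ => (pow_pos (ratio_pos k) _).le) x)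
      (fun J => ?_) hpos
  by_cases hx : x ∈ ivSet (IJ k ch J)
  · exact Or.inr (indicator_of_mem hx (fun _ => ratio k ^ (i + 1))).ge
  · exact Or.inl (indicator_of_notMem hx _)

lemma one_le_wgt_of_pos {k : ℕ} (hk : 1 ≤ k) (ch : ℝ × ℝ → Bool) {x : ℝ}
    (hx : 0 < wgt k ch x) : 1 ≤ wgt k ch x :=
  le_tsum_of_tsum_pos (levelWgt_nonneg k ch · x)
    (fun i => (levelWgt_eq_zero_or_le k ch i x).imp_right (one_le_pow₀ (one_le_ratio hk)).trans)
    hx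

lemma exists_finset_Kfam_subset (k n : ℕ) :
    ∃ s : Finset (ℝ × ℝ), Kfam k n ⊆ s ∧ s.card ≤ (3 ^ (k - 1)) ^ n := by
  induction n with
  | zero => exact ⟨{(0, 1)}, by simp [Kfam], by simp⟩
  | succ n ih =>
    obtain ⟨s, hs, hcard⟩ := ih
    refine ⟨(s ×ˢ Finset.range (3 ^ (k - 1))).image fun q => child k q.1 q.2, ?_, ?_⟩
    · rintro I ⟨A, hA, j, hj, rfl⟩
      exact Finset.mem_image.2 ⟨(A, j), Finset.mem_product.2 ⟨hs hA, Finset.mem_range.2 hj⟩, rfl⟩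
    · calc _ ≤ (s ×ˢ Finset.range (3 ^ (k - 1))).card := Finset.card_image_le
        _ = s.card * 3 ^ (k - 1) := by rw [Finset.card_product, Finset.card_range]
        _ ≤ (3 ^ (k - 1)) ^ n * 3 ^ (k - 1) := Nat.mul_le_mul_right _ hcard
        _ = (3 ^ (k - 1)) ^ (n + 1) := (pow_succ _ _).symm

lemma exists_finset_Jfam_subset (k i : ℕ) :
    ∃ t : Finset (ℝ × ℝ), Jfam k (i + 1) ⊆ t ∧ t.card ≤ (3 ^ (k - 1)) ^ i := by
  obtain ⟨s, hs, hcard⟩ := exists_finset_Kfam_subset k i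
  refine ⟨s.image mid, fun J hJ => ?_, Finset.card_image_le.trans hcard⟩
  obtain ⟨A, hA, rfl⟩ := mem_Jfam_succ.1 hJ
  exact Finset.mem_image_of_mem mid (hs hA)

lemma finite_Jfam (k i : ℕ) : (Jfam k (i + 1)).Finite :=
  let ⟨t, ht, _⟩ := exists_finset_Jfam_subset k i
  t.finite_toSet.subset ht

lemma natCard_Jfam_le (k i : ℕ) : Nat.card (Jfam k (i + 1)) ≤ (3 ^ (k - 1)) ^ i := by
  obtain ⟨t, ht, hcard⟩ := exists_finset_Jfam_subset k i
  rw [Nat.card_coe_set_eq]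
  exact (ncard_le_ncard ht t.finite_toSet).trans ((ncard_coe_finset t).trans_le hcard)

lemma len_IJ (k : ℕ) (ch : ℝ × ℝ → Bool) (J : ℝ × ℝ) :
    len (IJ k ch J) = (3 : ℝ) ^ (1 - (k : ℤ)) * len J := by
  unfold IJ len
  split_ifs <;> ring

lemma integrable_indicator_ivSet (I : ℝ × ℝ) (c : ℝ) :
    Integrable ((ivSet I).indicator fun _ => c) :=
  (integrableOn_const (by simp [ivSet])).integrable_indicator measurableSet_Ico

lemma integral_indicator_IJ (k : ℕ) (ch : ℝ × ℝ → Bool) {J : ℝ × ℝ} (hJ : 0 ≤ len J) (c : ℝ) :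
    ∫ x, (ivSet (IJ k ch J)).indicator (fun _ => c) x = (3 : ℝ) ^ (1 - (k : ℤ)) * len J * c := by
  have hIJ : 0 ≤ len (IJ k ch J) := by rw [len_IJ]; positivity
  unfold ivSet
  rw [integral_indicator_const c measurableSet_Ico, smul_eq_mul,
    Real.volume_real_Ico_of_le (by simp only [len] at hIJ; linarith)]
  exact congrArg (· * c) (len_IJ k ch J)

lemma integrable_levelWgt (k : ℕ) (ch : ℝ × ℝ → Bool) (i : ℕ) : Integrable (levelWgt k ch i) := by
  have := (finite_Jfam k i).fintype
  have hsum : levelWgt k ch i = fun x => ∑ J : ↥(Jfam k (i + 1)),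
      (ivSet (IJ k ch J)).indicator (fun _ => ratio k ^ (i + 1)) x :=
    funext fun x => tsum_fintype _
  rw [hsum]
  exact integrable_finsetSum _ fun J _ => integrable_indicator_ivSet _ _

lemma integral_levelWgt_le {k : ℕ} (hk : 1 ≤ k) (ch : ℝ × ℝ → Bool) (i : ℕ) :
    ∫ x, levelWgt k ch i x ≤
      (3 : ℝ) ^ (1 - (k : ℤ)) * ratio k / 3 * (ratio k / 3) ^ i := by
  have := (finite_Jfam k i).fintype
  set ρ : ℝ := (3 : ℝ) ^ (1 - (k : ℤ))
  set r := ratio k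
  have hr : 0 ≤ r := (ratio_pos k).le
  have hterm : ∀ J : ↥(Jfam k (i + 1)),
      ∫ x, (ivSet (IJ k ch J)).indicator (fun _ => r ^ (i + 1)) x
        = ρ * ((ρ / 3) ^ i / 3) * r ^ (i + 1) := by
    rintro ⟨J, hJ⟩
    obtain ⟨A, hA, rfl⟩ := mem_Jfam_succ.1 hJ
    have hlen : len (mid A) = (ρ / 3) ^ i / 3 := by rw [len_mid, len_of_mem_Kfam hA]
    rw [integral_indicator_IJ k ch (by rw [hlen]; positivity), hlen]
  have hcard : (Nat.card (Jfam k (i + 1)) : ℝ) ≤ ((3 : ℝ) ^ (k - 1)) ^ i := by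
    exact_mod_cast natCard_Jfam_le k i
  calc ∫ x, levelWgt k ch i x
      = ∑ J : ↥(Jfam k (i + 1)), ∫ x, (ivSet (IJ k ch J)).indicator (fun _ => r ^ (i + 1)) x := by
        simp only [levelWgt, tsum_fintype]
        exact integral_finsetSum _ fun J _ => integrable_indicator_ivSet _ _
    _ = Nat.card (Jfam k (i + 1)) * (ρ * ((ρ / 3) ^ i / 3) * r ^ (i + 1)) := by
        simp only [hterm, Finset.sum_const, Finset.card_univ, Nat.card_eq_fintype_card,
          nsmul_eq_mul]
    _ ≤ ((3 : ℝ) ^ (k - 1)) ^ i * (ρ * ((ρ / 3) ^ i / 3) * r ^ (i + 1)) := by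
        gcongr
    _ = ρ * r / 3 * ((3 : ℝ) ^ (k - 1) * ρ * r / 3) ^ i := by ring
    _ = ρ * r / 3 * (r / 3) ^ i := by rw [three_pow_pred_mul_zpow hk, one_mul]

lemma integrable_wgt {k : ℕ} (hk : 1 ≤ k) (ch : ℝ × ℝ → Bool) : Integrable (wgt k ch) := by
  have hr : 0 ≤ ratio k / 3 := div_nonneg (ratio_pos k).le zero_le_three
  refine integrable_tsum_of_nonneg (levelWgt_nonneg k ch) (integrable_levelWgt k ch) ?_
  refine .of_nonneg_of_le (fun i => integral_nonneg (levelWgt_nonneg k ch i))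
    (integral_levelWgt_le hk ch) ((summable_geometric_of_lt_one hr ?_).mul_left _)
  linarith [ratio_lt_three hk]

lemma sgm_nonneg (p : ℝ) (k : ℕ) (ch : ℝ × ℝ → Bool) (x : ℝ) : 0 ≤ sgm p k ch x := by
  unfold sgm
  split_ifs with h
  exacts [Real.rpow_nonneg h.le _, le_rfl]

lemma sgm_le_one {p : ℝ} (hp : 1 ≤ p) {k : ℕ} (hk : 1 ≤ k) (ch : ℝ × ℝ → Bool) (x : ℝ) :
    sgm p k ch x ≤ 1 := by
  unfold sgm
  split_ifs with h
  exacts [Real.rpow_le_one_of_one_le_of_nonpos (one_le_wgt_of_pos hk ch h) (by linarith),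
    zero_le_one]

lemma sgm_eq_zero_of_mem_diff_core (p : ℝ) {k n : ℕ} (hk : 3 ≤ k) (ch : ℝ × ℝ → Bool)
    {K : ℝ × ℝ} (hK : K ∈ Kfam k n) {x : ℝ} (hx : x ∈ ivSet K \ core K) : sgm p k ch x = 0 := by
  simp [sgm, wgt_eq_zero_of_mem_diff_core hk ch hK hx]

lemma integrableOn_sgm {p : ℝ} (hp : 1 ≤ p) {k : ℕ} (hk : 1 ≤ k) (ch : ℝ × ℝ → Bool)
    (I : ℝ × ℝ) : IntegrableOn (sgm p k ch) (ivSet I) := by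
  have hφ : Measurable fun y : ℝ => if 0 < y then y ^ (1 - p) else 0 :=
    Measurable.ite (measurableSet_lt measurable_const measurable_id)
      (measurable_id.pow_const _) measurable_const
  refine Measure.integrableOn_of_bounded (M := 1) (by simp [ivSet])
    (hφ.comp_aemeasurable (integrable_wgt hk ch).aemeasurable).aestronglyMeasurable
    (Eventually.of_forall fun x => ?_)
  rw [Real.norm_of_nonneg (sgm_nonneg p k ch x)]
  exact sgm_le_one hp hk ch x

/-- Lemma 3.4 of the paper (comparison for intervals sharing an endpoint with `K ∈ 𝐊`). -/
theorem statement3 (p : ℝ) (hp : 1 < p) :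
    ∃ C : ℝ, 0 < C ∧ ∀ k : ℕ, 3000 < k → ∀ ch : ℝ × ℝ → Bool, ∀ K ∈ KK k,
      ∀ L : ℝ × ℝ, L.1 < L.2 → ivSet L ⊆ ivSet K → (L.1 = K.1 ∨ L.2 = K.2) →
      ∀ L' : ℝ × ℝ, L'.1 < L'.2 → ivSet L' ⊆ ivSet L → (L'.1 = K.1 ∨ L'.2 = K.2) →
        avg (wgt k ch) L' ≤ C * avg (wgt k ch) L ∧
        avg (sgm p k ch) L' ≤ C * avg (sgm p k ch) L := by
  refine ⟨4, by norm_num, fun k hk ch K hK L hL hLK _ L' _ hL'L hL'K => ?_⟩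
  obtain ⟨n, hKn⟩ := mem_iUnion.1 hK
  have hk₁ : 1 ≤ k := by omega
  have hk₃ : 3 ≤ k := by omega
  exact ⟨avg_le_four_mul_avg (wgt_nonneg k ch) (integrable_wgt hk₁ ch).integrableOn
      (fun x => wgt_eq_zero_of_mem_diff_core hk₃ ch hKn) hL hLK hL'L hL'K,
    avg_le_four_mul_avg (sgm_nonneg p k ch) (integrableOn_sgm hp.le hk₁ ch K)
      (fun x => sgm_eq_zero_of_mem_diff_core p hk₃ ch hKn) hL hLK hL'L hL'K⟩

end RTpaper
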